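/- arXiv:1204.5049 — 4 statements merged into one kernel-verified Lean document; each statement's English description precedes it below -/
import Mathlib

section
/- Let H and K be complex Hilbert spaces, A, B ∈ B(H) positive invertible operators with mA ≤ B ≤ MA for positive reals m < M, let Φ : B(H) → B(K) be a positive linear map, and let α ∈ (0,1). Then Φ(A) #_α Φ(B) − Φ(A #_α B) ≤ [ (1−α)((M^α − m^α)/(α(M − m)))^{α/(α−1)} − (Mm^α − mM^α)/(M − m) ] Φ(A). -/
/-! Write `μ, ν` for the slope and intercept of the chord of `t ↦ t ^ α` over `[m, M]`. The operator
`A^{-1/2} B A^{-1/2}` has spectrum in `[m, M]`, where the chord lies below `t ^ α` by concavity;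
conjugating by `A^{1/2}` and applying `Φ` gives `μ Φ(B) + ν Φ(A) ≤ Φ(A #_α B)`. The tangent line of
`t ^ α` with the same slope, `t ^ α ≤ μ t + c` on `[0, ∞)`, gives in the same way
`Φ(A) #_α Φ(B) ≤ μ Φ(B) + c Φ(A)`; here `Φ(A)` need not be invertible, but `Φ(B) ≤ M Φ(A)` keeps
`Φ(B)` inside the support of `Φ(A)`. Subtracting the two bounds gives the claim. -/

open scoped InnerProductSpace

noncomputable section

/-- The real power `A ^ r` of a (positive) operator, via the continuous functional calculus. -/
noncomputable def opPow {H : Type} [NormedAddCommGroup H] [InnerProductSpace ℂ H]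
    [CompleteSpace H] (A : H →L[ℂ] H) (r : ℝ) : H →L[ℂ] H :=
  cfc (fun t : ℝ => t ^ r) A

/-- The operator mean `A σ B = A^{1/2} f(A^{-1/2} B A^{-1/2}) A^{1/2}` associated with the
representing function `f`. -/
noncomputable def opMean {H : Type} [NormedAddCommGroup H] [InnerProductSpace ℂ H]
    [CompleteSpace H] (f : ℝ → ℝ) (A B : H →L[ℂ] H) : H →L[ℂ] H :=
  opPow A (1/2) * cfc f (opPow A (-(1/2)) * B * opPow A (-(1/2))) * opPow A (1/2)

/-- The weighted geometric mean `A #_α B = A^{1/2} (A^{-1/2} B A^{-1/2})^α A^{1/2}`. -/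
noncomputable def geoMean {H : Type} [NormedAddCommGroup H] [InnerProductSpace ℂ H]
    [CompleteSpace H] (α : ℝ) (A B : H →L[ℂ] H) : H →L[ℂ] H :=
  opMean (fun t : ℝ => t ^ α) A B

/-- `f : (0,∞) → (0,∞)` is operator monotone: for all positive invertible operators `X ≤ Y`
(on any complex Hilbert space), `f(X) ≤ f(Y)` in the Loewner order. -/
def IsOperatorMonotone (f : ℝ → ℝ) : Prop :=
  ∀ (H : Type) [NormedAddCommGroup H] [InnerProductSpace ℂ H] [CompleteSpace H]
    (X Y : H →L[ℂ] H), 0 ≤ X → IsUnit X → 0 ≤ Y → IsUnit Y → X ≤ Y →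
      cfc f X ≤ cfc f Y

open Set

theorem ConcaveOn.chord_le {s : Set ℝ} {f : ℝ → ℝ} (hf : ConcaveOn ℝ s f) {m M : ℝ}
    (hm : m ∈ s) (hM : M ∈ s) (hmM : m < M) {t : ℝ} (ht : t ∈ Icc m M) :
    (f M - f m) / (M - m) * t + (M * f m - m * f M) / (M - m) ≤ f t := by
  have hMm : 0 < M - m := sub_pos.mpr hmM
  have hcomb := hf.2 hm hM (div_nonneg (sub_nonneg.mpr ht.2) hMm.le)
    (div_nonneg (sub_nonneg.mpr ht.1) hMm.le) (by field_simp; ring)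
  have ht' : ((M - t) / (M - m)) • m + ((t - m) / (M - m)) • M = t := by
    simp only [smul_eq_mul]; field_simp; ring
  rw [ht', smul_eq_mul, smul_eq_mul] at hcomb
  refine le_of_eq_of_le ?_ hcomb
  field_simp
  ring

/-- The tangent line of `t ^ α` of slope `μ`, touching at `t₀ = (μ / α) ^ (1 / (α - 1))`. -/
theorem Real.rpow_le_mul_add {α μ : ℝ} (hα0 : 0 < α) (hα1 : α < 1) (hμ : 0 < μ) {t : ℝ}
    (ht : 0 ≤ t) : t ^ α ≤ μ * t + (1 - α) * (μ / α) ^ (α / (α - 1)) := by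
  have hμα : 0 < μ / α := div_pos hμ hα0
  set t₀ := (μ / α) ^ (1 / (α - 1)) with ht₀
  have ht₀_pos : 0 < t₀ := Real.rpow_pos_of_pos hμα _
  have hslope : α * t₀ ^ (α - 1) = μ := by
    rw [ht₀, ← Real.rpow_mul hμα.le, one_div, inv_mul_cancel₀ (by linarith), Real.rpow_one]
    field_simp
  have hvalue : t₀ * t₀ ^ (α - 1) = (μ / α) ^ (α / (α - 1)) := by
    rw [← Real.rpow_one_add' ht₀_pos.le (by linarith), ht₀, ← Real.rpow_mul hμα.le]
    ring_nf
  have hAMGM := Real.geom_mean_le_arith_mean2_weighted hα0.le (by linarith : 0 ≤ 1 - α)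
    ht ht₀_pos.le (by ring)
  calc t ^ α = t ^ α * t₀ ^ (1 - α) * t₀ ^ (α - 1) := by
        rw [mul_assoc, ← Real.rpow_add ht₀_pos]; norm_num
    _ ≤ (α * t + (1 - α) * t₀) * t₀ ^ (α - 1) := by gcongr
    _ = α * t₀ ^ (α - 1) * t + (1 - α) * (t₀ * t₀ ^ (α - 1)) := by ring
    _ = μ * t + (1 - α) * (μ / α) ^ (α / (α - 1)) := by rw [hslope, hvalue]

section CStarAlgebra

variable {A : Type*} [CStarAlgebra A] [PartialOrder A] [StarOrderedRing A]

theorem mul_eq_zero_of_conj_eq_zero {Q F : A} (hQ : 0 ≤ Q) (hF : IsSelfAdjoint F)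
    (h : F * Q * F = 0) : Q * F = 0 := by
  have hR : IsSelfAdjoint (CFC.sqrt Q) := .of_nonneg (CFC.sqrt_nonneg Q)
  have hRF : star (CFC.sqrt Q * F) * (CFC.sqrt Q * F) = 0 := by
    rw [star_mul, hR.star_eq, hF.star_eq, ← h]
    nth_rewrite 3 [← CFC.sqrt_mul_sqrt_self Q hQ]
    simp only [mul_assoc]
  rw [← CFC.sqrt_mul_sqrt_self Q hQ, mul_assoc, (CStarRing.star_mul_self_eq_zero_iff _).mp hRF,
    mul_zero]

theorem conj_eq_self_of_le_smul {P Q E : A} (hQ : 0 ≤ Q) {c : ℝ} (hQP : Q ≤ c • P)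
    (hE : IsSelfAdjoint E) (hEP : E * P = P) : E * Q * E = Q := by
  have hF : IsSelfAdjoint (1 - E) := .sub (.one A) hE
  have hFP : (1 - E) * P = 0 := by rw [sub_mul, one_mul, hEP, sub_self]
  have hFQF : (1 - E) * Q * (1 - E) = 0 := by
    refine le_antisymm ?_ (hF.conjugate_nonneg hQ)
    calc (1 - E) * Q * (1 - E) ≤ (1 - E) * (c • P) * (1 - E) := hF.conjugate_le_conjugate hQP
      _ = 0 := by rw [mul_smul_comm, hFP, smul_zero, zero_mul]
  have hQF : Q * (1 - E) = 0 := mul_eq_zero_of_conj_eq_zero hQ hF hFQF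
  have hFQ : (1 - E) * Q = 0 := by
    simpa only [star_mul, star_zero, hF.star_eq, hQ.isSelfAdjoint.star_eq] using congrArg star hQF
  rw [sub_mul, one_mul, sub_eq_zero] at hFQ
  rw [mul_sub, mul_one, sub_eq_zero] at hQF
  rw [← hFQ, ← hQF]

theorem spectrum_subset_Icc_of_le {X : A} (hX : IsSelfAdjoint X) {m M : ℝ} (hmX : m • 1 ≤ X)
    (hXM : X ≤ M • 1) : spectrum ℝ X ⊆ Icc m M := by
  rw [← Algebra.algebraMap_eq_smul_one] at hmX hXM
  exact fun x hx => ⟨(algebraMap_le_iff_le_spectrum hX).mp hmX x hx,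
    (le_algebraMap_iff_spectrum_le hX).mp hXM x hx⟩

end CStarAlgebra

theorem LinearMap.monotone_of_map_nonneg {R M N : Type*} [Ring R] [AddCommGroup M]
    [PartialOrder M] [IsOrderedAddMonoid M] [AddCommGroup N] [PartialOrder N]
    [IsOrderedAddMonoid N] [Module R M] [Module R N] (Φ : M →ₗ[R] N)
    (hΦ : ∀ x, 0 ≤ x → 0 ≤ Φ x) : Monotone Φ := fun x y hxy => by
  simpa using hΦ (y - x) (sub_nonneg.mpr hxy)

section Operator

variable {E : Type} [NormedAddCommGroup E] [InnerProductSpace ℂ E] [CompleteSpace E]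

theorem opPow_isSelfAdjoint (T : E →L[ℂ] E) (r : ℝ) : IsSelfAdjoint (opPow T r) :=
  cfc_predicate _ T

theorem opPow_mul_opPow {T : E →L[ℂ] E} (hT : 0 ≤ T) (hTu : IsUnit T) (r s : ℝ) :
    opPow T r * opPow T s = opPow T (r + s) := by
  have hpos : ∀ x ∈ spectrum ℝ T, 0 < x := fun _ hx =>
    (hTu.isStrictlyPositive hT).spectrum_pos hx
  have hcont (u : ℝ) : ContinuousOn (fun t : ℝ => t ^ u) (spectrum ℝ T) :=
    continuousOn_id.rpow_const fun x hx => .inl (hpos x hx).ne'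
  rw [opPow, opPow, opPow, ← cfc_mul _ _ T (hcont r) (hcont s)]
  exact cfc_congr fun x hx => (Real.rpow_add (hpos x hx) r s).symm

theorem opPow_zero {T : E →L[ℂ] E} (hT : IsSelfAdjoint T) : opPow T 0 = 1 := by
  simp only [opPow, Real.rpow_zero]
  exact cfc_const_one ℝ T

theorem opPow_half_mul_opPow_neg_half {T : E →L[ℂ] E} (hT : 0 ≤ T) (hTu : IsUnit T) :
    opPow T (1 / 2) * opPow T (-(1 / 2)) = 1 := by
  rw [opPow_mul_opPow hT hTu, add_neg_cancel, opPow_zero hT.isSelfAdjoint]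

theorem opPow_neg_half_mul_opPow_half {T : E →L[ℂ] E} (hT : 0 ≤ T) (hTu : IsUnit T) :
    opPow T (-(1 / 2)) * opPow T (1 / 2) = 1 := by
  rw [opPow_mul_opPow hT hTu, neg_add_cancel, opPow_zero hT.isSelfAdjoint]

theorem opPow_half_mul_self {T : E →L[ℂ] E} (hT : 0 ≤ T) :
    opPow T (1 / 2) * opPow T (1 / 2) = T := by
  have hcont : ContinuousOn (fun t : ℝ => t ^ (1 / 2 : ℝ)) (spectrum ℝ T) :=
    (Real.continuous_rpow_const (by norm_num)).continuousOn
  rw [opPow, ← cfc_mul _ _ T hcont hcont]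
  refine (cfc_congr fun x hx => ?_).trans (cfc_id ℝ T)
  rw [← Real.rpow_add' (spectrum_nonneg_of_nonneg hT hx) (by norm_num)]
  norm_num

theorem cfc_mul_id_add_const {T : E →L[ℂ] E} (hT : IsSelfAdjoint T) (a b : ℝ) :
    cfc (fun t : ℝ => a * t + b) T = a • T + b • 1 := by
  rw [cfc_add (a := T) (fun t : ℝ => a * t) (fun _ => b), cfc_const_mul_id a T,
    cfc_const b T, Algebra.algebraMap_eq_smul_one]

/-- When `0` is an accumulation point of the spectrum of `P`, `t ↦ t ^ (-1/2)` is discontinuous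
there and `opPow P (-(1/2))` is the junk value `0`; otherwise `P^{1/2} P^{-1/2}` is the support
projection of `P`, which fixes `Q`. -/
theorem opPow_half_mul_conj_opPow_neg_half_le {P Q : E →L[ℂ] E} (hP : 0 ≤ P) (hQ : 0 ≤ Q)
    {c : ℝ} (hQP : Q ≤ c • P) :
    opPow P (1 / 2) * (opPow P (-(1 / 2)) * Q * opPow P (-(1 / 2))) * opPow P (1 / 2) ≤ Q := by
  by_cases hcont : ContinuousOn (fun t : ℝ => t ^ (-(1 / 2) : ℝ)) (spectrum ℝ P)
  · have hsqrt : ContinuousOn (fun t : ℝ => t ^ (1 / 2 : ℝ)) (spectrum ℝ P) :=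
      (Real.continuous_rpow_const (by norm_num)).continuousOn
    set e : ℝ → ℝ := fun t => t ^ (1 / 2 : ℝ) * t ^ (-(1 / 2) : ℝ)
    have hleft : opPow P (1 / 2) * opPow P (-(1 / 2)) = cfc e P :=
      (cfc_mul _ _ P hsqrt hcont).symm
    have hright : opPow P (-(1 / 2)) * opPow P (1 / 2) = cfc e P :=
      (cfc_mul _ _ P hcont hsqrt).symm.trans (cfc_congr fun x _ => mul_comm _ _)
    have hfix : cfc e P * P = P := by
      nth_rewrite 2 [← cfc_id' ℝ P]
      rw [← cfc_mul e (fun t => t) P (hsqrt.mul hcont)]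
      refine (cfc_congr fun x hx => ?_).trans (cfc_id' ℝ P)
      rcases (spectrum_nonneg_of_nonneg hP hx).eq_or_lt with rfl | hx0
      · simp [e]
      · simp only [e, ← Real.rpow_add hx0]
        norm_num
    refine le_of_eq ?_
    calc _ = (opPow P (1 / 2) * opPow P (-(1 / 2))) * Q * (opPow P (-(1 / 2)) * opPow P (1 / 2)) :=
          by simp only [mul_assoc]
      _ = cfc e P * Q * cfc e P := by rw [hleft, hright]
      _ = Q := conj_eq_self_of_le_smul hQ hQP (cfc_predicate e P) hfix
  · have hzero : opPow P (-(1 / 2)) = 0 := cfc_apply_of_not_continuousOn P hcont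
    rwa [hzero, mul_zero, mul_zero, zero_mul]

theorem smul_add_smul_le_opMean {A B : E →L[ℂ] E} (hA : 0 ≤ A) (hAu : IsUnit A)
    (hB : IsSelfAdjoint B) {m M : ℝ} (hmB : m • A ≤ B) (hBM : B ≤ M • A) {f : ℝ → ℝ}
    (hf : ContinuousOn f (Icc m M)) {a b : ℝ} (hfab : ∀ t ∈ Icc m M, a * t + b ≤ f t) :
    a • B + b • A ≤ opMean f A B := by
  set Ah := opPow A (1 / 2)
  set Ai := opPow A (-(1 / 2))
  set X := Ai * B * Ai
  have hAi : IsSelfAdjoint Ai := opPow_isSelfAdjoint A _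
  have hAhAh : Ah * Ah = A := opPow_half_mul_self hA
  have hAhAi : Ah * Ai = 1 := opPow_half_mul_opPow_neg_half hA hAu
  have hAiAh : Ai * Ah = 1 := opPow_neg_half_mul_opPow_half hA hAu
  have hAiAAi : Ai * A * Ai = 1 := by
    calc Ai * A * Ai = (Ai * Ah) * (Ah * Ai) := by rw [← hAhAh]; simp only [mul_assoc]
      _ = 1 := by rw [hAiAh, hAhAi, one_mul]
  have hAhXAh : Ah * X * Ah = B := by
    calc Ah * X * Ah = (Ah * Ai) * B * (Ai * Ah) := by simp only [X, mul_assoc]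
      _ = B := by rw [hAhAi, hAiAh, one_mul, mul_one]
  have hconj (r : ℝ) : Ai * (r • A) * Ai = r • 1 := by
    rw [mul_smul_comm, smul_mul_assoc, hAiAAi]
  have hspec : spectrum ℝ X ⊆ Icc m M :=
    spectrum_subset_Icc_of_le (hB.conjugate_self hAi)
      (hconj m ▸ hAi.conjugate_le_conjugate hmB) (hconj M ▸ hAi.conjugate_le_conjugate hBM)
  have hcfc : a • X + b • 1 ≤ cfc f X := by
    rw [← cfc_mul_id_add_const (hB.conjugate_self hAi)]
    exact cfc_mono (fun x hx => hfab x (hspec hx)) (by fun_prop) (hf.mono hspec)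
  calc a • B + b • A = Ah * (a • X + b • 1) * Ah := by
        simp only [mul_add, add_mul, mul_smul_comm, smul_mul_assoc, mul_one, hAhXAh, hAhAh]
    _ ≤ Ah * cfc f X * Ah := (opPow_isSelfAdjoint A _).conjugate_le_conjugate hcfc

theorem opMean_le_smul_add_smul {P Q : E →L[ℂ] E} (hP : 0 ≤ P) (hQ : 0 ≤ Q) {c : ℝ}
    (hQP : Q ≤ c • P) {f : ℝ → ℝ} (hf : ContinuousOn f (Ici 0)) {a b : ℝ} (ha : 0 ≤ a)
    (hfab : ∀ t, 0 ≤ t → f t ≤ a * t + b) : opMean f P Q ≤ a • Q + b • P := by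
  set Ph := opPow P (1 / 2)
  set Pi := opPow P (-(1 / 2))
  set Y := Pi * Q * Pi
  have hPhPh : Ph * Ph = P := opPow_half_mul_self hP
  have hY : 0 ≤ Y := (opPow_isSelfAdjoint P _).conjugate_nonneg hQ
  have hspec : spectrum ℝ Y ⊆ Ici 0 := fun _ hx => spectrum_nonneg_of_nonneg hY hx
  have hcfc : cfc f Y ≤ a • Y + b • 1 := by
    rw [← cfc_mul_id_add_const hY.isSelfAdjoint]
    exact cfc_mono (fun x hx => hfab x (hspec hx)) (hf.mono hspec) (by fun_prop)
  calc opMean f P Q = Ph * cfc f Y * Ph := rfl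
    _ ≤ Ph * (a • Y + b • 1) * Ph := (opPow_isSelfAdjoint P _).conjugate_le_conjugate hcfc
    _ = a • (Ph * Y * Ph) + b • P := by
        simp only [mul_add, add_mul, mul_smul_comm, smul_mul_assoc, mul_one, hPhPh]
    _ ≤ a • Q + b • P := by
        gcongr
        exact opPow_half_mul_conj_opPow_neg_half_le hP hQ hQP

end Operator

theorem stmt_6_general {H K : Type} [NormedAddCommGroup H] [InnerProductSpace ℂ H] [CompleteSpace H]
    [NormedAddCommGroup K] [InnerProductSpace ℂ K] [CompleteSpace K]
    (A B : H →L[ℂ] H) (hA : 0 ≤ A) (hAu : IsUnit A) (hB : 0 ≤ B)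
    (m M : ℝ) (hm : 0 < m) (hM : m < M)
    (h₁ : m • A ≤ B) (h₂ : B ≤ M • A)
    (Φ : (H →L[ℂ] H) →ₗ[ℂ] (K →L[ℂ] K))
    (hΦ : ∀ X : H →L[ℂ] H, 0 ≤ X → 0 ≤ Φ X)
    (α : ℝ) (hα : α ∈ Set.Ioo (0 : ℝ) 1) :
    geoMean α (Φ A) (Φ B) - Φ (geoMean α A B) ≤
      ((1 - α) * ((M ^ α - m ^ α) / (α * (M - m))) ^ (α / (α - 1)) -
        (M * m ^ α - m * M ^ α) / (M - m)) • Φ A := by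
  obtain ⟨hα0, hα1⟩ := hα
  set μ := (M ^ α - m ^ α) / (M - m)
  have hμ : 0 < μ := div_pos (sub_pos.mpr (Real.rpow_lt_rpow hm.le hM hα0)) (sub_pos.mpr hM)
  have hΦmono := Φ.monotone_of_map_nonneg hΦ
  have hcont := (Real.continuous_rpow_const hα0.le).continuousOn (s := Icc m M)
  have hlower : μ • Φ B + ((M * m ^ α - m * M ^ α) / (M - m)) • Φ A ≤ Φ (geoMean α A B) := by
    have h := hΦmono <| smul_add_smul_le_opMean hA hAu hB.isSelfAdjoint h₁ h₂ hcont
      fun t ht => (Real.concaveOn_rpow hα0.le hα1.le).chord_le hm.le (hm.trans hM).le hM ht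
    rwa [map_add, LinearMap.map_smul_of_tower, LinearMap.map_smul_of_tower] at h
  have hupper : geoMean α (Φ A) (Φ B) ≤
      μ • Φ B + ((1 - α) * ((M ^ α - m ^ α) / (α * (M - m))) ^ (α / (α - 1))) • Φ A := by
    have hBA : Φ B ≤ M • Φ A := by
      simpa only [LinearMap.map_smul_of_tower] using hΦmono h₂
    refine opMean_le_smul_add_smul (hΦ A hA) (hΦ B hB) hBA
      (Real.continuous_rpow_const hα0.le).continuousOn hμ.le fun t ht => ?_
    rw [mul_comm α, ← div_div]
    exact Real.rpow_le_mul_add hα0 hα1 hμ ht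
  calc _ ≤ _ := sub_le_sub hupper hlower
    _ = _ := by rw [sub_smul]; abel

/-- **Reverse Ando inequality of the second type (Seo).** -/
theorem stmt_6 {H K : Type} [NormedAddCommGroup H] [InnerProductSpace ℂ H] [CompleteSpace H]
    [NormedAddCommGroup K] [InnerProductSpace ℂ K] [CompleteSpace K]
    (A B : H →L[ℂ] H) (hA : 0 ≤ A) (hAu : IsUnit A) (hB : 0 ≤ B) (hBu : IsUnit B)
    (m M : ℝ) (hm : 0 < m) (hM : m < M)
    (h₁ : m • A ≤ B) (h₂ : B ≤ M • A)
    (Φ : (H →L[ℂ] H) →ₗ[ℂ] (K →L[ℂ] K))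
    (hΦ : ∀ X : H →L[ℂ] H, 0 ≤ X → 0 ≤ Φ X)
    (α : ℝ) (hα : α ∈ Set.Ioo (0 : ℝ) 1) :
    geoMean α (Φ A) (Φ B) - Φ (geoMean α A B) ≤
      ((1 - α) * ((M ^ α - m ^ α) / (α * (M - m))) ^ (α / (α - 1)) -
        (M * m ^ α - m * M ^ α) / (M - m)) • Φ A :=
  stmt_6_general A B hA hAu hB m M hm hM h₁ h₂ Φ hΦ α hα
end
end

section
/- Let H and K be complex Hilbert spaces, A, B ∈ B(H) positive invertible operators with m²A ≤ B ≤ M²A for positive reals m < M, and let Φ : B(H) → B(K) be a strictly positive linear map. Then Φ(A # B)^{−1/2} Φ(B) Φ(A # B)^{−1/2} − Φ(A # B)^{1/2} Φ(A)^{−1} Φ(A # B)^{1/2} ≤ (√M − √m)² I. -/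
open scoped InnerProductSpace

noncomputable section

/-! With `C = A^{-1/2} B A^{-1/2}` the hypothesis reads `m² ≤ C ≤ M²`, so
`(C^{1/2} - m)(M - C^{1/2}) ≥ 0`, i.e. `C + mM ≤ (m + M) C^{1/2}`. Conjugating by `A^{1/2}`
gives `B + mM A ≤ (m + M) (A # B)`, which the positive map `Φ` preserves. Conjugating by
`P^{-1/2}`, where `P = Φ(A # B)`, turns this into `X + mM Y ≤ m + M` for
`X = P^{-1/2} Φ(B) P^{-1/2}` and `Y = P^{-1/2} Φ(A) P^{-1/2}`, and
`Y⁻¹ = P^{1/2} Φ(A)⁻¹ P^{1/2}`.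
The operator AM-GM inequality `mM Y + Y⁻¹ ≥ 2√(mM)` then bounds `X - Y⁻¹` by
`m + M - 2√(mM) = (√M - √m)²`. -/

open CFC

lemma Real.add_mul_le_add_mul_sqrt {m M t : ℝ} (hm : 0 ≤ m) (hmM : m ≤ M) (h₁ : m ^ 2 ≤ t)
    (h₂ : t ≤ M ^ 2) : t + m * M ≤ (m + M) * √t := by
  have hmt : m ≤ √t := Real.le_sqrt_of_sq_le h₁
  have htM : √t ≤ M := Real.sqrt_le_iff.2 ⟨hm.trans hmM, h₂⟩
  have hsq : √t ^ 2 = t := Real.sq_sqrt (by nlinarith)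
  nlinarith [mul_nonneg (sub_nonneg.2 hmt) (sub_nonneg.2 htM)]

lemma Real.two_mul_sqrt_le_mul_add_inv {k x : ℝ} (hk : 0 ≤ k) (hx : 0 < x) :
    2 * √k ≤ k * x + x⁻¹ := by
  have hsq : √k ^ 2 = k := Real.sq_sqrt hk
  have hdiff : k * x + x⁻¹ - 2 * √k = (√k * x - 1) ^ 2 / x := by
    field_simp
    linear_combination (-x ^ 2) * hsq
  have : 0 ≤ (√k * x - 1) ^ 2 / x := by positivity
  linarith

lemma Real.add_sub_two_mul_sqrt_mul {m M : ℝ} (hm : 0 ≤ m) (hM : 0 ≤ M) :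
    m + M - 2 * √(m * M) = (√M - √m) ^ 2 := by
  rw [Real.sqrt_mul hm, sub_sq, Real.sq_sqrt hm, Real.sq_sqrt hM]
  ring

section CStarAlgebra

variable {A : Type*} [CStarAlgebra A] [PartialOrder A] [StarOrderedRing A]

lemma rpow_neg_half_mul_self_mul_rpow_neg_half {a : A} (ha : IsStrictlyPositive a) :
    a ^ (-(1 / 2) : ℝ) * a * a ^ (-(1 / 2) : ℝ) = 1 := by
  nth_rw 2 [← rpow_one a]
  rw [← rpow_add ha.isUnit, ← rpow_add ha.isUnit]
  norm_num [rpow_zero a ha.nonneg]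

lemma rpow_half_mul_rpow_half {a : A} (ha : IsStrictlyPositive a) :
    a ^ (1 / 2 : ℝ) * a ^ (1 / 2 : ℝ) = a := by
  rw [← rpow_add ha.isUnit]
  norm_num [rpow_one a]

lemma rpow_half_conj_rpow_neg_half_conj {a : A} (ha : IsStrictlyPositive a) (b : A) :
    a ^ (1 / 2 : ℝ) * (a ^ (-(1 / 2) : ℝ) * b * a ^ (-(1 / 2) : ℝ)) * a ^ (1 / 2 : ℝ) =
      b := by
  calc _ = (a ^ (1 / 2 : ℝ) * a ^ (-(1 / 2) : ℝ)) * b *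
        (a ^ (-(1 / 2) : ℝ) * a ^ (1 / 2 : ℝ)) := by noncomm_ring
    _ = b := by rw [rpow_mul_rpow_neg _ ha, rpow_neg_mul_rpow _ ha, one_mul, mul_one]

lemma Ring.inverse_rpow_neg_half_conj {p : A} (hp : IsStrictlyPositive p) (y : A) :
    Ring.inverse (p ^ (-(1 / 2) : ℝ) * y * p ^ (-(1 / 2) : ℝ)) =
      p ^ (1 / 2 : ℝ) * Ring.inverse y * p ^ (1 / 2 : ℝ) := by
  have hq : IsUnit (p ^ (-(1 / 2) : ℝ)) := (IsStrictlyPositive.rpow p _ hp).isUnit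
  rw [Ring.inverse_mul (Or.inr hq), Ring.inverse_mul (Or.inl hq), inverse_rpow p _ (by norm_num),
    neg_neg, mul_assoc]

theorem add_smul_one_le_smul_rpow_half {c : A} {m M : ℝ} (hm : 0 ≤ m) (hmM : m ≤ M)
    (h₁ : (m ^ 2) • (1 : A) ≤ c) (h₂ : c ≤ (M ^ 2) • (1 : A)) :
    c + (m * M) • (1 : A) ≤ (m + M) • c ^ (1 / 2 : ℝ) := by
  have hc : 0 ≤ c := (smul_nonneg (sq_nonneg m) zero_le_one).trans h₁
  rw [← Algebra.algebraMap_eq_smul_one] at h₁ h₂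
  have hspec₁ := (algebraMap_le_iff_le_spectrum (a := c)).1 h₁
  have hspec₂ := (le_algebraMap_iff_spectrum_le (a := c)).1 h₂
  calc c + (m * M) • (1 : A) = cfc (fun x : ℝ => x + m * M) c := by
        rw [cfc_add_const (m * M) (fun x : ℝ => x) c, cfc_id' ℝ c,
          Algebra.algebraMap_eq_smul_one]
    _ ≤ cfc (fun x : ℝ => (m + M) * √x) c :=
        cfc_mono fun x hx => Real.add_mul_le_add_mul_sqrt hm hmM (hspec₁ x hx) (hspec₂ x hx)
    _ = (m + M) • c ^ (1 / 2 : ℝ) := by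
        rw [cfc_const_mul .., rpow_eq_cfc_real hc]
        exact congrArg _ (cfc_congr fun x _ => Real.sqrt_eq_rpow x)

theorem two_mul_sqrt_smul_one_le_smul_add_inverse {z : A} (hz : IsStrictlyPositive z) {k : ℝ}
    (hk : 0 ≤ k) : (2 * √k) • (1 : A) ≤ k • z + Ring.inverse z := by
  have hcont : ContinuousOn (fun x : ℝ => x⁻¹) (spectrum ℝ z) :=
    continuousOn_id.inv₀ fun x hx => (hz.spectrum_pos hx).ne'
  have hinv : Ring.inverse z = cfc (fun x : ℝ => x⁻¹) z := by
    rw [inverse_eq_rpow_neg_one hz, rpow_eq_cfc_real hz.nonneg]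
    exact cfc_congr fun x _ => Real.rpow_neg_one x
  calc (2 * √k) • (1 : A) = cfc (fun _ : ℝ => 2 * √k) z := by
        rw [cfc_const _ z, Algebra.algebraMap_eq_smul_one]
    _ ≤ cfc (fun x : ℝ => k * x + x⁻¹) z :=
        cfc_mono fun x hx => Real.two_mul_sqrt_le_mul_add_inv hk (hz.spectrum_pos hx)
    _ = k • z + Ring.inverse z := by
        rw [cfc_add (a := z) (fun x : ℝ => k * x) _ (by fun_prop) hcont, cfc_const_mul_id k z,
          hinv]

theorem add_smul_le_smul_rpow_half_conj {a b : A} (ha : IsStrictlyPositive a) {m M : ℝ}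
    (hm : 0 ≤ m) (hmM : m ≤ M) (h₁ : (m ^ 2) • a ≤ b) (h₂ : b ≤ (M ^ 2) • a) :
    b + (m * M) • a ≤ (m + M) • (a ^ (1 / 2 : ℝ) *
      (a ^ (-(1 / 2) : ℝ) * b * a ^ (-(1 / 2) : ℝ)) ^ (1 / 2 : ℝ) * a ^ (1 / 2 : ℝ)) := by
  set q := a ^ (-(1 / 2) : ℝ)
  set s := a ^ (1 / 2 : ℝ)
  have hq : IsSelfAdjoint q := rpow_nonneg.isSelfAdjoint
  have hs : IsSelfAdjoint s := rpow_nonneg.isSelfAdjoint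
  have hconj (r : ℝ) : q * (r • a) * q = r • (1 : A) := by
    rw [mul_smul_comm, smul_mul_assoc, rpow_neg_half_mul_self_mul_rpow_neg_half ha]
  have hc := add_smul_one_le_smul_rpow_half hm hmM
    (hconj _ ▸ hq.conjugate_le_conjugate h₁) (hconj _ ▸ hq.conjugate_le_conjugate h₂)
  have hsc := hs.conjugate_le_conjugate hc
  rwa [mul_add, add_mul, rpow_half_conj_rpow_neg_half_conj ha, mul_smul_comm, smul_mul_assoc,
    mul_one, rpow_half_mul_rpow_half ha, mul_smul_comm, smul_mul_assoc] at hsc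

theorem rpow_neg_half_conj_sub_rpow_half_conj_inverse_le {p x y : A} (hp : IsStrictlyPositive p)
    (hy : IsStrictlyPositive y) {m M : ℝ} (hm : 0 ≤ m) (hM : 0 ≤ M)
    (h : x + (m * M) • y ≤ (m + M) • p) :
    p ^ (-(1 / 2) : ℝ) * x * p ^ (-(1 / 2) : ℝ) -
        p ^ (1 / 2 : ℝ) * Ring.inverse y * p ^ (1 / 2 : ℝ) ≤
      ((√M - √m) ^ 2) • (1 : A) := by
  set q := p ^ (-(1 / 2) : ℝ)
  have hq : IsSelfAdjoint q := rpow_nonneg.isSelfAdjoint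
  set z := q * y * q
  have hz : IsStrictlyPositive z :=
    hy.conjugate_of_isUnit_of_isSelfAdjoint _ _ (IsStrictlyPositive.rpow p _ hp).isUnit hq
  have hqh := hq.conjugate_le_conjugate h
  rw [mul_add, add_mul, mul_smul_comm, smul_mul_assoc, mul_smul_comm, smul_mul_assoc,
    rpow_neg_half_mul_self_mul_rpow_neg_half hp] at hqh
  calc q * x * q - p ^ (1 / 2 : ℝ) * Ring.inverse y * p ^ (1 / 2 : ℝ)
      = (q * x * q + (m * M) • z) - ((m * M) • z + Ring.inverse z) := by
        rw [Ring.inverse_rpow_neg_half_conj hp]; abel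
    _ ≤ (m + M) • (1 : A) - (2 * √(m * M)) • (1 : A) :=
        sub_le_sub hqh (two_mul_sqrt_smul_one_le_smul_add_inverse hz (mul_nonneg hm hM))
    _ = ((√M - √m) ^ 2) • (1 : A) := by
        rw [← sub_smul, Real.add_sub_two_mul_sqrt_mul hm hM]

end CStarAlgebra

section Operator

variable {H : Type} [NormedAddCommGroup H] [InnerProductSpace ℂ H] [CompleteSpace H]

lemma opPow_eq_rpow {a : H →L[ℂ] H} (ha : 0 ≤ a) (r : ℝ) : opPow a r = a ^ r :=
  (rpow_eq_cfc_real ha).symm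

lemma geoMean_half_eq {a b : H →L[ℂ] H} (ha : 0 ≤ a) (hb : 0 ≤ b) :
    geoMean (1 / 2) a b = a ^ (1 / 2 : ℝ) *
      (a ^ (-(1 / 2) : ℝ) * b * a ^ (-(1 / 2) : ℝ)) ^ (1 / 2 : ℝ) * a ^ (1 / 2 : ℝ) := by
  change opPow a (1 / 2) * opPow (opPow a (-(1 / 2)) * b * opPow a (-(1 / 2))) (1 / 2) *
    opPow a (1 / 2) = _
  rw [opPow_eq_rpow ha, opPow_eq_rpow ha,
    opPow_eq_rpow (conjugate_nonneg_of_nonneg hb rpow_nonneg)]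

lemma IsStrictlyPositive.geoMean_half {a b : H →L[ℂ] H} (ha : IsStrictlyPositive a)
    (hb : IsStrictlyPositive b) : IsStrictlyPositive (geoMean (1 / 2) a b) := by
  rw [geoMean_half_eq ha.nonneg hb.nonneg]
  have hc := hb.conjugate_of_isUnit_of_isSelfAdjoint _ _
    (IsStrictlyPositive.rpow a (-(1 / 2)) ha).isUnit rpow_nonneg.isSelfAdjoint
  exact (IsStrictlyPositive.rpow _ (1 / 2) hc).conjugate_of_isUnit_of_isSelfAdjoint _ _
    (IsStrictlyPositive.rpow a (1 / 2) ha).isUnit rpow_nonneg.isSelfAdjoint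

theorem add_smul_le_smul_geoMean_half {a b : H →L[ℂ] H} (ha : IsStrictlyPositive a) {m M : ℝ}
    (hm : 0 ≤ m) (hmM : m ≤ M) (h₁ : (m ^ 2) • a ≤ b) (h₂ : b ≤ (M ^ 2) • a) :
    b + (m * M) • a ≤ (m + M) • geoMean (1 / 2) a b := by
  rw [geoMean_half_eq ha.nonneg ((smul_nonneg (sq_nonneg m) ha.nonneg).trans h₁)]
  exact add_smul_le_smul_rpow_half_conj ha hm hmM h₁ h₂

end Operator

theorem stmt_8_general {H K : Type} [NormedAddCommGroup H] [InnerProductSpace ℂ H] [CompleteSpace H]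
    [NormedAddCommGroup K] [InnerProductSpace ℂ K] [CompleteSpace K]
    (A B : H →L[ℂ] H) (hA : 0 ≤ A) (hAu : IsUnit A)
    (m M : ℝ) (hm : 0 < m) (hM : m < M)
    (h₁ : (m ^ 2) • A ≤ B) (h₂ : B ≤ (M ^ 2) • A)
    (Φ : (H →L[ℂ] H) →ₗ[ℂ] (K →L[ℂ] K))
    (hΦ : ∀ X : H →L[ℂ] H, 0 ≤ X → 0 ≤ Φ X)
    (hΦu : ∀ X : H →L[ℂ] H, 0 ≤ X → IsUnit X → IsUnit (Φ X)) :
    opPow (Φ (geoMean (1/2) A B)) (-(1/2)) * Φ B * opPow (Φ (geoMean (1/2) A B)) (-(1/2)) -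
        opPow (Φ (geoMean (1/2) A B)) (1/2) * Ring.inverse (Φ A) *
          opPow (Φ (geoMean (1/2) A B)) (1/2) ≤
      ((Real.sqrt M - Real.sqrt m) ^ 2) • (1 : K →L[ℂ] K) := by
  have hΦpos {X : H →L[ℂ] H} (hX : IsStrictlyPositive X) : IsStrictlyPositive (Φ X) :=
    (hΦu X hX.nonneg hX.isUnit).isStrictlyPositive (hΦ X hX.nonneg)
  have hA' : IsStrictlyPositive A := hAu.isStrictlyPositive hA
  have hB' : IsStrictlyPositive B := (hA'.smul (pow_pos hm 2)).of_le h₁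
  have hP := hΦpos (hA'.geoMean_half hB')
  have hΦle : Φ B + (m * M) • Φ A ≤ (m + M) • Φ (geoMean (1 / 2) A B) := by
    have h := OrderHomClass.mono (PositiveLinearMap.mk₀ Φ hΦ)
      (add_smul_le_smul_geoMean_half hA' hm.le hM.le h₁ h₂)
    change Φ _ ≤ Φ _ at h
    rwa [map_add, LinearMap.map_smul_of_tower, LinearMap.map_smul_of_tower] at h
  rw [opPow_eq_rpow hP.nonneg, opPow_eq_rpow hP.nonneg]
  exact rpow_neg_half_conj_sub_rpow_half_conj_inverse_le hP (hΦpos hA') hm.le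
    (hm.le.trans hM.le) hΦle

/-- **Operator Shisha–Mond inequality.** -/
theorem stmt_8 {H K : Type} [NormedAddCommGroup H] [InnerProductSpace ℂ H] [CompleteSpace H]
    [NormedAddCommGroup K] [InnerProductSpace ℂ K] [CompleteSpace K]
    (A B : H →L[ℂ] H) (hA : 0 ≤ A) (hAu : IsUnit A) (hB : 0 ≤ B) (hBu : IsUnit B)
    (m M : ℝ) (hm : 0 < m) (hM : m < M)
    (h₁ : (m ^ 2) • A ≤ B) (h₂ : B ≤ (M ^ 2) • A)
    (Φ : (H →L[ℂ] H) →ₗ[ℂ] (K →L[ℂ] K))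
    (hΦ : ∀ X : H →L[ℂ] H, 0 ≤ X → 0 ≤ Φ X)
    (hΦu : ∀ X : H →L[ℂ] H, 0 ≤ X → IsUnit X → IsUnit (Φ X)) :
    opPow (Φ (geoMean (1/2) A B)) (-(1/2)) * Φ B * opPow (Φ (geoMean (1/2) A B)) (-(1/2)) -
        opPow (Φ (geoMean (1/2) A B)) (1/2) * Ring.inverse (Φ A) *
          opPow (Φ (geoMean (1/2) A B)) (1/2) ≤
      ((Real.sqrt M - Real.sqrt m) ^ 2) • (1 : K →L[ℂ] K) :=
  stmt_8_general A B hA hAu m M hm hM h₁ h₂ Φ hΦ hΦu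
end
end

section
/- Let H be a complex Hilbert space and A, B ∈ B(H) with 0 < b₁I ≤ A ≤ a₁I and 0 < b₂I ≤ B ≤ a₂I. Let f : (0,∞) → (0,∞) be an operator monotone function with f(1) = 1 and σ the associated operator mean. Then for every unit vector x ∈ H: ⟨Ax, x⟩ · ⟨|A^{−1/2}(A σ B)|² x, x⟩ − ⟨(A σ B)x, x⟩² ≤ (a₁²/4)(f(a₂b₁⁻¹) − f(b₂a₁⁻¹))². -/
open scoped InnerProductSpace

noncomputable section

/-! Put `T = A^{-1/2} B A^{-1/2}` and `D = f(T)`, so that `A σ B = A^{1/2} D A^{1/2}`; for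
`y = A^{1/2} x` the three vector states in the inequality are `‖y‖²`, `‖D y‖²` and `⟨D y, y⟩`.
The bounds on `A` and `B` give `b₂/a₁ ≤ T ≤ a₂/b₁`, hence `m ≤ D ≤ M` with `m = f(b₂/a₁)`,
`M = f(a₂/b₁)` by operator monotonicity. As `D` commutes with scalars, `(M - D)(D - m) ≥ 0`,
that is `‖D y‖² ≤ (M + m)⟨D y, y⟩ - M m ‖y‖²`. Completing the square in `⟨D y, y⟩` bounds the
left-hand side by `‖y‖⁴ (M - m)² / 4`, and `‖y‖² = ⟨A x, x⟩ ≤ a₁`. -/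

open CFC

lemma mul_sub_sq_le_of_le_sub {n t d m M a : ℝ} (hn : 0 ≤ n) (hna : n ≤ a)
    (hd : d ≤ (M + m) * t - M * m * n) : n * d - t ^ 2 ≤ a ^ 2 / 4 * (M - m) ^ 2 := by
  have hn2 : n ^ 2 ≤ a ^ 2 := pow_le_pow_left₀ hn hna 2
  nlinarith [mul_le_mul_of_nonneg_left hd hn, sq_nonneg (t - n * (M + m) / 2),
    mul_le_mul_of_nonneg_right hn2 (sq_nonneg (M - m))]

lemma opPow_eq_rpow_s12 {H : Type} [NormedAddCommGroup H] [InnerProductSpace ℂ H] [CompleteSpace H]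
    {A : H →L[ℂ] H} (hA : 0 ≤ A) (r : ℝ) : opPow A r = A ^ r :=
  (rpow_eq_cfc_real hA).symm

section CStarAlgebra

variable {𝒜 : Type*} [CStarAlgebra 𝒜] [PartialOrder 𝒜] [StarOrderedRing 𝒜]

lemma conjugate_rpow_neg_half_smul_one {a : 𝒜} (ha : IsUnit a) (c : ℝ) :
    a ^ (-(1 / 2) : ℝ) * (c • 1) * a ^ (-(1 / 2) : ℝ) = c • a ^ (-1 : ℝ) := by
  rw [mul_smul_comm, mul_one, smul_mul_assoc, ← rpow_add ha]
  norm_num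

lemma one_le_smul_rpow_neg_one {a : 𝒜} {β : ℝ} (ha : IsStrictlyPositive a)
    (haβ : a ≤ algebraMap ℝ 𝒜 β) : 1 ≤ β • a ^ (-1 : ℝ) := by
  have h := rpow_nonneg.isSelfAdjoint.conjugate_le_conjugate haβ (c := a ^ (-(1 / 2) : ℝ))
  rwa [conjugate_rpow_neg_one_half a ha, Algebra.algebraMap_eq_smul_one,
    conjugate_rpow_neg_half_smul_one ha.isUnit] at h

lemma smul_rpow_neg_one_le_one {a : 𝒜} {α : ℝ} (ha : IsStrictlyPositive a)
    (hαa : algebraMap ℝ 𝒜 α ≤ a) : α • a ^ (-1 : ℝ) ≤ 1 := by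
  have h := rpow_nonneg.isSelfAdjoint.conjugate_le_conjugate hαa (c := a ^ (-(1 / 2) : ℝ))
  rwa [conjugate_rpow_neg_one_half a ha, Algebra.algebraMap_eq_smul_one,
    conjugate_rpow_neg_half_smul_one ha.isUnit] at h

lemma algebraMap_le_conjugate_rpow_neg_half {a b : 𝒜} {β γ : ℝ} (ha : IsStrictlyPositive a)
    (hβ : 0 < β) (hγ : 0 ≤ γ) (haβ : a ≤ algebraMap ℝ 𝒜 β) (hγb : algebraMap ℝ 𝒜 γ ≤ b) :
    algebraMap ℝ 𝒜 (γ * β⁻¹) ≤ a ^ (-(1 / 2) : ℝ) * b * a ^ (-(1 / 2) : ℝ) := by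
  rw [Algebra.algebraMap_eq_smul_one] at hγb ⊢
  calc (γ * β⁻¹) • (1 : 𝒜)
      ≤ (γ * β⁻¹) • (β • a ^ (-1 : ℝ)) :=
        smul_le_smul_of_nonneg_left (one_le_smul_rpow_neg_one ha haβ) (by positivity)
    _ = a ^ (-(1 / 2) : ℝ) * (γ • 1) * a ^ (-(1 / 2) : ℝ) := by
        rw [smul_smul, inv_mul_cancel_right₀ hβ.ne', conjugate_rpow_neg_half_smul_one ha.isUnit]
    _ ≤ a ^ (-(1 / 2) : ℝ) * b * a ^ (-(1 / 2) : ℝ) :=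
        rpow_nonneg.isSelfAdjoint.conjugate_le_conjugate hγb

lemma conjugate_rpow_neg_half_le_algebraMap {a b : 𝒜} {α δ : ℝ} (hα : 0 < α) (hδ : 0 ≤ δ)
    (hαa : algebraMap ℝ 𝒜 α ≤ a) (hbδ : b ≤ algebraMap ℝ 𝒜 δ) :
    a ^ (-(1 / 2) : ℝ) * b * a ^ (-(1 / 2) : ℝ) ≤ algebraMap ℝ 𝒜 (δ * α⁻¹) := by
  have ha : IsStrictlyPositive a := (isStrictlyPositive_algebraMap hα).of_le hαa
  rw [Algebra.algebraMap_eq_smul_one] at hbδ ⊢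
  calc a ^ (-(1 / 2) : ℝ) * b * a ^ (-(1 / 2) : ℝ)
      ≤ a ^ (-(1 / 2) : ℝ) * (δ • 1) * a ^ (-(1 / 2) : ℝ) :=
        rpow_nonneg.isSelfAdjoint.conjugate_le_conjugate hbδ
    _ = (δ * α⁻¹) • (α • a ^ (-1 : ℝ)) := by
        rw [smul_smul, inv_mul_cancel_right₀ hα.ne', conjugate_rpow_neg_half_smul_one ha.isUnit]
    _ ≤ (δ * α⁻¹) • (1 : 𝒜) :=
        smul_le_smul_of_nonneg_left (smul_rpow_neg_one_le_one ha hαa) (by positivity)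

lemma mul_self_le_smul_sub_algebraMap {d : 𝒜} {m M : ℝ} (hm : algebraMap ℝ 𝒜 m ≤ d)
    (hM : d ≤ algebraMap ℝ 𝒜 M) : d * d ≤ (M + m) • d - algebraMap ℝ 𝒜 (M * m) := by
  have hcomm : Commute (algebraMap ℝ 𝒜 M - d) (d - algebraMap ℝ 𝒜 m) :=
    ((Algebra.commute_algebraMap_left M d).sub_left (Commute.refl d)).sub_right
      ((Algebra.commute_algebraMap_left M _).sub_left (Algebra.commute_algebraMap_right m d))
  have h := hcomm.mul_nonneg (sub_nonneg.2 hM) (sub_nonneg.2 hm)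
  rw [← sub_nonneg]
  convert h using 1
  rw [Algebra.smul_def, map_add, map_mul, mul_sub, sub_mul, sub_mul, ← Algebra.commutes m d]
  noncomm_ring

end CStarAlgebra

section InnerProductSpace

variable {E : Type*} [NormedAddCommGroup E] [InnerProductSpace ℂ E]

lemma re_inner_apply_le_of_le {S T : E →L[ℂ] E} (h : S ≤ T) (x : E) :
    (⟪S x, x⟫_ℂ).re ≤ (⟪T x, x⟫_ℂ).re := by
  have := ((ContinuousLinearMap.le_def S T).mp h).re_inner_nonneg_left x
  rwa [sub_apply, inner_sub_left, map_sub, sub_nonneg] at this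

lemma re_inner_algebraMap_apply (c : ℝ) (x : E) :
    (⟪algebraMap ℝ (E →L[ℂ] E) c x, x⟫_ℂ).re = c * ‖x‖ ^ 2 := by
  rw [Algebra.algebraMap_eq_smul_one, smul_apply, one_apply_eq_self, ← Complex.coe_smul,
    inner_smul_left]
  simp [inner_self_eq_norm_sq_to_K, ← Complex.ofReal_pow]

variable [CompleteSpace E]

lemma re_inner_star_mul_self_apply (T : E →L[ℂ] E) (x : E) :
    (⟪(star T * T) x, x⟫_ℂ).re = ‖T x‖ ^ 2 :=
  (T.apply_norm_sq_eq_inner_adjoint_left x).symm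

lemma inner_star_mul_mul_apply (S D : E →L[ℂ] E) (x : E) :
    ⟪(star S * D * S) x, x⟫_ℂ = ⟪D (S x), S x⟫_ℂ :=
  ContinuousLinearMap.adjoint_inner_left S x (D (S x))

lemma norm_apply_sq_le_of_algebraMap_bounds {D : E →L[ℂ] E} {m M : ℝ}
    (hm : algebraMap ℝ (E →L[ℂ] E) m ≤ D) (hM : D ≤ algebraMap ℝ (E →L[ℂ] E) M) (y : E) :
    ‖D y‖ ^ 2 ≤ (M + m) * (⟪D y, y⟫_ℂ).re - M * m * ‖y‖ ^ 2 := by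
  have hD : IsSelfAdjoint D := by
    simpa using (IsSelfAdjoint.of_nonneg (sub_nonneg.2 hm)).add
      (IsSelfAdjoint.algebraMap (E →L[ℂ] E) (.all m))
  have h := re_inner_apply_le_of_le (mul_self_le_smul_sub_algebraMap hm hM) y
  rw [sub_apply, inner_sub_left, Complex.sub_re, re_inner_algebraMap_apply, smul_apply,
    ← Complex.coe_smul, inner_smul_left] at h
  rw [← re_inner_star_mul_self_apply, hD.star_eq]
  simpa using h

end InnerProductSpace

namespace IsOperatorMonotone

variable {H : Type} [NormedAddCommGroup H] [InnerProductSpace ℂ H] [CompleteSpace H]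
  {f : ℝ → ℝ} {T : H →L[ℂ] H} {c : ℝ}

lemma algebraMap_le_cfc (hf : IsOperatorMonotone f) (hc : 0 < c)
    (hcT : algebraMap ℝ (H →L[ℂ] H) c ≤ T) : algebraMap ℝ (H →L[ℂ] H) (f c) ≤ cfc f T := by
  have hc' := isStrictlyPositive_algebraMap (A := H →L[ℂ] H) hc
  have hT := hc'.of_le hcT
  simpa [cfc_algebraMap] using hf H _ T hc'.nonneg hc'.isUnit hT.nonneg hT.isUnit hcT

lemma cfc_le_algebraMap (hf : IsOperatorMonotone f) (hT : IsStrictlyPositive T)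
    (hTc : T ≤ algebraMap ℝ (H →L[ℂ] H) c) : cfc f T ≤ algebraMap ℝ (H →L[ℂ] H) (f c) := by
  have hc := hT.of_le hTc
  simpa [cfc_algebraMap] using hf H T _ hT.nonneg hT.isUnit hc.nonneg hc.isUnit hTc

end IsOperatorMonotone

theorem stmt_12_general {H : Type} [NormedAddCommGroup H] [InnerProductSpace ℂ H] [CompleteSpace H]
    (A B : H →L[ℂ] H) (a₁ b₁ a₂ b₂ : ℝ)
    (hb₁ : 0 < b₁) (hb₂ : 0 < b₂)
    (hA₁ : b₁ • (1 : H →L[ℂ] H) ≤ A) (hA₂ : A ≤ a₁ • (1 : H →L[ℂ] H))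
    (hB₁ : b₂ • (1 : H →L[ℂ] H) ≤ B) (hB₂ : B ≤ a₂ • (1 : H →L[ℂ] H))
    (f : ℝ → ℝ)
    (hf_mono : IsOperatorMonotone f)
    (x : H) (hx : ‖x‖ = 1) :
    (⟪A x, x⟫_ℂ).re *
        (⟪(star (opPow A (-(1/2)) * opMean f A B) * (opPow A (-(1/2)) * opMean f A B)) x,
            x⟫_ℂ).re -
        ((⟪(opMean f A B) x, x⟫_ℂ).re) ^ 2 ≤
      a₁ ^ 2 / 4 * (f (a₂ * b₁⁻¹) - f (b₂ * a₁⁻¹)) ^ 2 := by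
  simp only [← Algebra.algebraMap_eq_smul_one] at hA₁ hA₂ hB₁ hB₂
  have hA : IsStrictlyPositive A := (isStrictlyPositive_algebraMap hb₁).of_le hA₁
  have : Nontrivial H := ⟨⟨x, 0, by simp [← norm_ne_zero_iff, hx]⟩⟩
  have ha₁ : 0 < a₁ := hb₁.trans_le (algebraMap_le_algebraMap.1 (hA₁.trans hA₂))
  have ha₂ : 0 ≤ a₂ := hb₂.le.trans (algebraMap_le_algebraMap.1 (hB₁.trans hB₂))
  set s := A ^ (1 / 2 : ℝ)
  set T := A ^ (-(1 / 2) : ℝ) * B * A ^ (-(1 / 2) : ℝ)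
  have hs : star s = s := rpow_nonneg.isSelfAdjoint.star_eq
  have hT_lb := algebraMap_le_conjugate_rpow_neg_half hA ha₁ hb₂.le hA₂ hB₁
  have hD_lb := hf_mono.algebraMap_le_cfc (by positivity) hT_lb
  have hT : IsStrictlyPositive T := (isStrictlyPositive_algebraMap (by positivity)).of_le hT_lb
  have hD_ub :=
    hf_mono.cfc_le_algebraMap hT (conjugate_rpow_neg_half_le_algebraMap hb₁ ha₂ hA₁ hB₂)
  have hmean : opMean f A B = star s * cfc f T * s := by
    rw [opMean, opPow_eq_rpow_s12 hA.nonneg, opPow_eq_rpow_s12 hA.nonneg, hs]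
  have hSi_mean : opPow A (-(1 / 2)) * opMean f A B = cfc f T * s := by
    rw [opPow_eq_rpow_s12 hA.nonneg, hmean, hs, ← mul_assoc, ← mul_assoc, rpow_neg_mul_rpow _ hA,
      one_mul]
  have hA_re : (⟪A x, x⟫_ℂ).re = ‖s x‖ ^ 2 := by
    rw [← re_inner_star_mul_self_apply, hs, ← rpow_add hA.isUnit, add_halves, rpow_one A]
  have hn : ‖s x‖ ^ 2 ≤ a₁ := by
    simpa [hA_re, re_inner_algebraMap_apply, hx] using re_inner_apply_le_of_le hA₂ x
  rw [hA_re, hSi_mean, re_inner_star_mul_self_apply, hmean, inner_star_mul_mul_apply]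
  exact mul_sub_sq_le_of_le_sub (sq_nonneg _) hn
    (norm_apply_sq_le_of_algebraMap_bounds hD_lb hD_ub _)

/-- **Corollary 3.11**: the vector-state version of the generalized
Ozeki–Izumino–Mori–Seo inequality. -/
theorem stmt_12 {H : Type} [NormedAddCommGroup H] [InnerProductSpace ℂ H] [CompleteSpace H]
    (A B : H →L[ℂ] H) (a₁ b₁ a₂ b₂ : ℝ)
    (hb₁ : 0 < b₁) (hb₂ : 0 < b₂)
    (hA₁ : b₁ • (1 : H →L[ℂ] H) ≤ A) (hA₂ : A ≤ a₁ • (1 : H →L[ℂ] H))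
    (hB₁ : b₂ • (1 : H →L[ℂ] H) ≤ B) (hB₂ : B ≤ a₂ • (1 : H →L[ℂ] H))
    (f : ℝ → ℝ) (hf_pos : ∀ x : ℝ, 0 < x → 0 < f x) (hf_one : f 1 = 1)
    (hf_mono : IsOperatorMonotone f)
    (x : H) (hx : ‖x‖ = 1) :
    (⟪A x, x⟫_ℂ).re *
        (⟪(star (opPow A (-(1/2)) * opMean f A B) * (opPow A (-(1/2)) * opMean f A B)) x,
            x⟫_ℂ).re -
        ((⟪(opMean f A B) x, x⟫_ℂ).re) ^ 2 ≤
      a₁ ^ 2 / 4 * (f (a₂ * b₁⁻¹) - f (b₂ * a₁⁻¹)) ^ 2 :=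
  stmt_12_general A B a₁ b₁ a₂ b₂ hb₁ hb₂ hA₁ hA₂ hB₁ hB₂ f hf_mono x hx
end
end

section
/- Let H be a complex Hilbert space and A, B ∈ B(H) with 0 < b₁I ≤ A ≤ a₁I and 0 < b₂I ≤ B ≤ a₂I. Then for every unit vector x ∈ H: ⟨Ax, x⟩⟨Bx, x⟩ − ⟨(A # B)x, x⟩² ≤ ((√(a₁a₂) − √(b₁b₂))/2)² · min{a₁b₁⁻¹, a₂b₂⁻¹}. -/
open scoped InnerProductSpace

noncomputable section

/-!
Put `C = A^{-1/2} B A^{-1/2}`. The spectral bounds give `m² ≤ C ≤ M²` for `m = √(b₂/a₁)` and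
`M = √(a₂/b₁)`, so `(M - C^{1/2})(C^{1/2} - m) ≥ 0`, that is `M m + C ≤ (M + m) C^{1/2}`.
Conjugating by `A^{1/2}` yields the operator inequality `M m A + B ≤ (M + m) (A # B)`, and in the
state of `x` it reads `M m p + q ≤ (M + m) g` with `p = ⟨Ax, x⟩`, `q = ⟨Bx, x⟩`,
`g = ⟨(A # B)x, x⟩`. Completing the square bounds `p q - g²` by `((M - m) p / 2)²`, which is the
first term of the minimum; since the scalar inequality is symmetric in `(a₁, b₁, p)` and
`(a₂, b₂, q)` once denominators are cleared, the same argument gives the second term.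
-/

section
variable {𝒜 : Type*} [CStarAlgebra 𝒜] [PartialOrder 𝒜] [StarOrderedRing 𝒜] {a b : 𝒜}

lemma spectrum_subset_Icc_of_smul_one_le (ha : IsSelfAdjoint a) {r s : ℝ}
    (hr : r • (1 : 𝒜) ≤ a) (hs : a ≤ s • (1 : 𝒜)) : spectrum ℝ a ⊆ Set.Icc r s := by
  rw [← Algebra.algebraMap_eq_smul_one] at hr hs
  exact fun t ht => ⟨(algebraMap_le_iff_le_spectrum ha).mp hr t ht,
    (le_algebraMap_iff_spectrum_le ha).mp hs t ht⟩

lemma smul_one_add_le_smul_cfc_sqrt (ha : IsSelfAdjoint a) {m M : ℝ} (hM : 0 ≤ M)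
    (h₁ : m ^ 2 • (1 : 𝒜) ≤ a) (h₂ : a ≤ M ^ 2 • (1 : 𝒜)) :
    (M * m) • (1 : 𝒜) + a ≤ (M + m) • cfc (fun t : ℝ => t ^ (1/2 : ℝ)) a := by
  have hspec := spectrum_subset_Icc_of_smul_one_le ha h₁ h₂
  have hlhs : (M * m) • (1 : 𝒜) + a = cfc (fun t : ℝ => M * m + t) a := by
    rw [cfc_const_add _ _ a, cfc_id' ℝ a, Algebra.algebraMap_eq_smul_one]
  rw [hlhs, ← cfc_smul (M + m) _ a]
  refine cfc_mono fun t ht => ?_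
  obtain ⟨hmt, htM⟩ := hspec ht
  rw [← Real.sqrt_eq_rpow, smul_eq_mul]
  have hm' : m ≤ √t := Real.le_sqrt_of_sq_le hmt
  have hM' : √t ≤ M := Real.sqrt_le_iff.mpr ⟨hM, htM⟩
  nlinarith [Real.sq_sqrt ((sq_nonneg m).trans hmt),
    mul_nonneg (sub_nonneg.mpr hm') (sub_nonneg.mpr hM')]

lemma smul_le_of_le_smul_one_of_smul_one_le {r s c : ℝ} (hc : 0 ≤ c) (ha : a ≤ r • 1)
    (hb : s • 1 ≤ b) (h : c * r ≤ s) : c • a ≤ b :=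
  calc c • a ≤ c • r • (1 : 𝒜) := smul_le_smul_of_nonneg_left ha hc
    _ = (c * r) • (1 : 𝒜) := smul_smul c r 1
    _ ≤ s • 1 := smul_le_smul_of_nonneg_right h zero_le_one
    _ ≤ b := hb

lemma le_smul_of_le_smul_one_of_smul_one_le {r s c : ℝ} (hc : 0 ≤ c) (hb : b ≤ s • 1)
    (ha : r • 1 ≤ a) (h : s ≤ c * r) : b ≤ c • a :=
  calc b ≤ s • (1 : 𝒜) := hb
    _ ≤ (c * r) • 1 := smul_le_smul_of_nonneg_right h zero_le_one
    _ = c • r • (1 : 𝒜) := (smul_smul c r 1).symm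
    _ ≤ c • a := smul_le_smul_of_nonneg_left ha hc

end

section
variable {H : Type} [NormedAddCommGroup H] [InnerProductSpace ℂ H] [CompleteSpace H]
  {A B : H →L[ℂ] H}

lemma isSelfAdjoint_opPow (A : H →L[ℂ] H) (r : ℝ) : IsSelfAdjoint (opPow A r) :=
  cfc_predicate _ A

lemma opPow_zero_s13 (hA : IsSelfAdjoint A) : opPow A 0 = 1 := by
  simp [opPow, cfc_const_one ℝ A]

lemma opPow_one (hA : IsSelfAdjoint A) : opPow A 1 = A := by
  simp [opPow, cfc_id' ℝ A]

lemma opPow_mul_opPow_s13 (hA : IsStrictlyPositive A) (r s : ℝ) :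
    opPow A r * opPow A s = opPow A (r + s) := by
  have hcont (u : ℝ) : ContinuousOn (fun t : ℝ => t ^ u) (spectrum ℝ A) :=
    continuousOn_id.rpow_const fun t ht => .inl (hA.spectrum_pos ht).ne'
  rw [opPow, opPow, opPow, ← cfc_mul _ _ A (hcont r) (hcont s)]
  exact cfc_congr fun t ht => (Real.rpow_add (hA.spectrum_pos ht) r s).symm

lemma opPow_mul_mul_opPow (hA : IsStrictlyPositive A) (r s : ℝ) :
    opPow A r * A * opPow A s = opPow A (r + 1 + s) := by
  rw [← opPow_mul_opPow_s13 hA, ← opPow_mul_opPow_s13 hA, opPow_one hA.isSelfAdjoint]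

lemma opPow_half_mul_opPow_half (hA : IsStrictlyPositive A) :
    opPow A (1/2) * opPow A (1/2) = A := by
  rw [opPow_mul_opPow_s13 hA]
  norm_num [opPow_one hA.isSelfAdjoint]

lemma opPow_neg_half_conj_smul (hA : IsStrictlyPositive A) (r : ℝ) :
    opPow A (-(1/2)) * (r • A) * opPow A (-(1/2)) = r • (1 : H →L[ℂ] H) := by
  rw [mul_smul_comm, smul_mul_assoc, opPow_mul_mul_opPow hA]
  norm_num [opPow_zero_s13 hA.isSelfAdjoint]

lemma opPow_half_conj_opPow_neg_half_conj (hA : IsStrictlyPositive A) (B : H →L[ℂ] H) :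
    opPow A (1/2) * (opPow A (-(1/2)) * B * opPow A (-(1/2))) * opPow A (1/2) = B := by
  simp only [← mul_assoc, opPow_mul_opPow_s13 hA]
  rw [mul_assoc, opPow_mul_opPow_s13 hA]
  norm_num [opPow_zero_s13 hA.isSelfAdjoint]

theorem smul_add_le_smul_geoMean (hA : IsStrictlyPositive A) {m M : ℝ} (hM : 0 ≤ M)
    (h₁ : m ^ 2 • A ≤ B) (h₂ : B ≤ M ^ 2 • A) :
    (M * m) • A + B ≤ (M + m) • geoMean (1/2) A B := by
  set R := opPow A (-(1/2))
  have hR : IsSelfAdjoint R := isSelfAdjoint_opPow A _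
  have hB : 0 ≤ B := (smul_nonneg (sq_nonneg m) hA.nonneg).trans h₁
  have hC : IsSelfAdjoint (R * B * R) := .of_nonneg (hR.conjugate_nonneg hB)
  have key := smul_one_add_le_smul_cfc_sqrt hC hM
    (opPow_neg_half_conj_smul hA _ ▸ hR.conjugate_le_conjugate h₁)
    (opPow_neg_half_conj_smul hA _ ▸ hR.conjugate_le_conjugate h₂)
  have := (isSelfAdjoint_opPow A (1/2)).conjugate_le_conjugate key
  rwa [mul_add, add_mul, mul_smul_comm, smul_mul_assoc, mul_one, opPow_half_mul_opPow_half hA,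
    opPow_half_conj_opPow_neg_half_conj hA, mul_smul_comm, smul_mul_assoc] at this

end

section
variable {H : Type} [NormedAddCommGroup H] [InnerProductSpace ℂ H]

lemma re_inner_le_re_inner {S T : H →L[ℂ] H} (h : S ≤ T) (x : H) :
    (⟪S x, x⟫_ℂ).re ≤ (⟪T x, x⟫_ℂ).re := by
  have := ((ContinuousLinearMap.le_def S T).mp h).re_inner_nonneg_left x
  simpa [inner_sub_left] using this

lemma re_inner_smul_apply (c : ℝ) (T : H →L[ℂ] H) (x : H) :
    (⟪(c • T) x, x⟫_ℂ).re = c * (⟪T x, x⟫_ℂ).re := by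
  rw [smul_apply, RCLike.real_smul_eq_coe_smul (K := ℂ), inner_smul_left]
  simp

lemma re_inner_smul_one_apply (c : ℝ) {x : H} (hx : ‖x‖ = 1) :
    (⟪(c • (1 : H →L[ℂ] H)) x, x⟫_ℂ).re = c := by
  simp [hx]

end
lemma mul_sub_sq_le_of_add_le {u v w p q g : ℝ} (hu : 0 ≤ u) (hp : 0 ≤ p)
    (h : w * p + u * q ≤ v * g) : 4 * u ^ 2 * (p * q - g ^ 2) ≤ (v ^ 2 - 4 * u * w) * p ^ 2 := by
  nlinarith [sq_nonneg (v * p - 2 * u * g), mul_le_mul_of_nonneg_left h (mul_nonneg hu hp)]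

lemma mul_sub_sq_le_of_weighted_add_le {α₁ β₁ α₂ β₂ p q g : ℝ} (hα₁ : 0 < α₁) (hβ₁ : 0 < β₁)
    (hp : 0 ≤ p) (hp' : p ≤ α₁ ^ 2) (h : α₂ * β₂ * p + α₁ * β₁ * q ≤ (α₁ * α₂ + β₁ * β₂) * g) :
    p * q - g ^ 2 ≤ ((α₁ * α₂ - β₁ * β₂) / 2) ^ 2 * (α₁ ^ 2 * (β₁ ^ 2)⁻¹) := by
  have key := mul_sub_sq_le_of_add_le (mul_pos hα₁ hβ₁).le hp h
  rw [← le_div_iff₀' (by positivity)] at key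
  calc p * q - g ^ 2 ≤ ((α₁ * α₂ + β₁ * β₂) ^ 2 - 4 * (α₁ * β₁) * (α₂ * β₂)) * p ^ 2
        / (4 * (α₁ * β₁) ^ 2) := key
    _ = ((α₁ * α₂ - β₁ * β₂) / 2) ^ 2 * (p ^ 2 / (α₁ * β₁) ^ 2) := by field_simp; ring
    _ ≤ ((α₁ * α₂ - β₁ * β₂) / 2) ^ 2 * ((α₁ ^ 2) ^ 2 / (α₁ * β₁) ^ 2) := by gcongr
    _ = ((α₁ * α₂ - β₁ * β₂) / 2) ^ 2 * (α₁ ^ 2 * (β₁ ^ 2)⁻¹) := by field_simp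

lemma mul_sub_sq_le_min_of_add_le {a₁ b₁ a₂ b₂ p q g : ℝ} (hb₁ : 0 < b₁) (hb₂ : 0 < b₂)
    (hp₁ : b₁ ≤ p) (hp₂ : p ≤ a₁) (hq₁ : b₂ ≤ q) (hq₂ : q ≤ a₂)
    (h : √(a₂ / b₁) * √(b₂ / a₁) * p + q ≤ (√(a₂ / b₁) + √(b₂ / a₁)) * g) :
    p * q - g ^ 2 ≤ ((√(a₁ * a₂) - √(b₁ * b₂)) / 2) ^ 2 * min (a₁ * b₁⁻¹) (a₂ * b₂⁻¹) := by
  obtain ⟨α₁, hα₁, rfl⟩ : ∃ α, 0 < α ∧ α ^ 2 = a₁ :=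
    ⟨√a₁, Real.sqrt_pos.2 (by linarith), Real.sq_sqrt (by linarith)⟩
  obtain ⟨α₂, hα₂, rfl⟩ : ∃ α, 0 < α ∧ α ^ 2 = a₂ :=
    ⟨√a₂, Real.sqrt_pos.2 (by linarith), Real.sq_sqrt (by linarith)⟩
  obtain ⟨β₁, hβ₁, rfl⟩ : ∃ β, 0 < β ∧ β ^ 2 = b₁ := ⟨√b₁, by positivity, Real.sq_sqrt hb₁.le⟩
  obtain ⟨β₂, hβ₂, rfl⟩ : ∃ β, 0 < β ∧ β ^ 2 = b₂ := ⟨√b₂, by positivity, Real.sq_sqrt hb₂.le⟩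
  rw [← div_pow, ← div_pow, Real.sqrt_sq (by positivity), Real.sqrt_sq (by positivity)] at h
  have hsym : α₂ * β₂ * p + α₁ * β₁ * q ≤ (α₁ * α₂ + β₁ * β₂) * g := by
    have := mul_le_mul_of_nonneg_left h (mul_pos hα₁ hβ₁).le
    field_simp at this
    linarith
  rw [← mul_pow, ← mul_pow, Real.sqrt_sq (by positivity), Real.sqrt_sq (by positivity),
    mul_min_of_nonneg _ _ (sq_nonneg _)]
  refine le_min (mul_sub_sq_le_of_weighted_add_le hα₁ hβ₁ (by linarith) hp₂ hsym) ?_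
  rw [mul_comm p, mul_comm α₁ α₂, mul_comm β₁ β₂]
  exact mul_sub_sq_le_of_weighted_add_le hα₂ hβ₂ (by linarith) hq₂ (by linarith)

/-- **Ozeki–Izumino–Mori–Seo inequality (Corollary 3.12).** -/
theorem stmt_13 {H : Type} [NormedAddCommGroup H] [InnerProductSpace ℂ H] [CompleteSpace H]
    (A B : H →L[ℂ] H) (a₁ b₁ a₂ b₂ : ℝ)
    (hb₁ : 0 < b₁) (hb₂ : 0 < b₂)
    (hA₁ : b₁ • (1 : H →L[ℂ] H) ≤ A) (hA₂ : A ≤ a₁ • (1 : H →L[ℂ] H))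
    (hB₁ : b₂ • (1 : H →L[ℂ] H) ≤ B) (hB₂ : B ≤ a₂ • (1 : H →L[ℂ] H))
    (x : H) (hx : ‖x‖ = 1) :
    (⟪A x, x⟫_ℂ).re * (⟪B x, x⟫_ℂ).re - ((⟪(geoMean (1/2) A B) x, x⟫_ℂ).re) ^ 2 ≤
      ((Real.sqrt (a₁ * a₂) - Real.sqrt (b₁ * b₂)) / 2) ^ 2 *
        min (a₁ * b₁⁻¹) (a₂ * b₂⁻¹) := by
  have hp₁ : b₁ ≤ (⟪A x, x⟫_ℂ).re := re_inner_smul_one_apply b₁ hx ▸ re_inner_le_re_inner hA₁ x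
  have hp₂ : (⟪A x, x⟫_ℂ).re ≤ a₁ := re_inner_smul_one_apply a₁ hx ▸ re_inner_le_re_inner hA₂ x
  have hq₁ : b₂ ≤ (⟪B x, x⟫_ℂ).re := re_inner_smul_one_apply b₂ hx ▸ re_inner_le_re_inner hB₁ x
  have hq₂ : (⟪B x, x⟫_ℂ).re ≤ a₂ := re_inner_smul_one_apply a₂ hx ▸ re_inner_le_re_inner hB₂ x
  have ha₁ : 0 < a₁ := by linarith
  have ha₂ : 0 < a₂ := by linarith
  have h₁ : √(b₂ / a₁) ^ 2 • A ≤ B := smul_le_of_le_smul_one_of_smul_one_le (sq_nonneg _) hA₂ hB₁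
    (by rw [Real.sq_sqrt (by positivity), div_mul_cancel₀ _ ha₁.ne'])
  have h₂ : B ≤ √(a₂ / b₁) ^ 2 • A := le_smul_of_le_smul_one_of_smul_one_le (sq_nonneg _) hB₂ hA₁
    (by rw [Real.sq_sqrt (by positivity), div_mul_cancel₀ _ hb₁.ne'])
  have hApos : IsStrictlyPositive A := (isStrictlyPositive_one.smul hb₁).of_le hA₁
  have key := re_inner_le_re_inner (smul_add_le_smul_geoMean hApos (Real.sqrt_nonneg _) h₁ h₂) x
  rw [add_apply, inner_add_left, Complex.add_re, re_inner_smul_apply, re_inner_smul_apply] at key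
  exact mul_sub_sq_le_min_of_add_le hb₁ hb₂ hp₁ hp₂ hq₁ hq₂ key
end
end
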